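/- Let A be a quasi-hereditary finite-type abelian category, X an object, s the ⪯-maximal element of S such that Hom(M(s), X) ≠ 0 (assuming X ≠ 0 lies in A_{⪯s}), X_s the image of the evaluation map Hom(M(s),X) ⊗ M(s) → X, and X' = X/X_s. Then Hom(X', N(r)) ≅ Hom(X, N(r)) for all r ≠ s, and Hom(X', N(s)) = 0. -/

import Mathlib

open CategoryTheory CategoryTheory.Limits

attribute [local instance] CategoryTheory.Limits.HasFiniteBiproducts.of_hasFiniteProducts

universe v u

namespace StmtAux

variable {A : Type u} [Category.{v} A] [Abelian A]

/-- `CompFactors X l` asserts that `l` is a list of composition factors for `X`. -/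
inductive CompFactors : A → List A → Prop
  | nil {X : A} (h : IsZero X) : CompFactors X []
  | cons {X Y L : A} {l : List A} (hL : Simple L) (i : Y ⟶ X) (p : X ⟶ L)
      (w : i ≫ p = 0) (hse : (ShortComplex.mk i p w).ShortExact)
      (h : CompFactors Y l) : CompFactors X (L :: l)

open Classical in
/-- The multiplicity `[l : L]` : the number of members of `l` isomorphic to `L`. -/
noncomputable def mult (L : A) (l : List A) : ℕ :=
  l.countP (fun M => decide (Nonempty (M ≅ L)))

end StmtAux

open StmtAux

namespace StmtAux

variable {A : Type u} [Category.{v} A] [Abelian A] {S : Type*} [LinearOrder S]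

/-- `X` belongs to the Serre subcategory `A_{⪯ s}` generated by the simple
objects `L t` for `t ⪯ s`: all composition factors of `X` are of this form. -/
def InSub (L : S → A) (s : S) (X : A) : Prop :=
  ∃ l : List A, CompFactors X l ∧ ∀ M ∈ l, ∃ t : S, t ≤ s ∧ Nonempty (M ≅ L t)

/-- The data of standard covers `M s` and costandard hulls `N s` for the family
of simple objects `L s`, `s ∈ S`:  `M s` is a projective cover of `L s` within
the Serre subcategory `A_{⪯ s}` with `[M s : L s] = 1`, and `N s` is an injective
hull of `L s` within `A_{⪯ s}` with `[N s : L s] = 1`.  A category admitting such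
data is quasi-hereditary. -/
structure QHData (L : S → A) where
  M : S → A
  N : S → A
  φ : ∀ s : S, M s ⟶ L s
  ψ : ∀ s : S, L s ⟶ N s
  M_mem : ∀ s : S, InSub L s (M s)
  N_mem : ∀ s : S, InSub L s (N s)
  φ_epi : ∀ s : S, Epi (φ s)
  ψ_mono : ∀ s : S, Mono (ψ s)
  M_proj : ∀ (s : S) (X Y : A), InSub L s X → InSub L s Y →
      ∀ (p : X ⟶ Y), Epi p → ∀ f : M s ⟶ Y, ∃ g : M s ⟶ X, g ≫ p = f
  N_inj : ∀ (s : S) (X Y : A), InSub L s X → InSub L s Y →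
      ∀ (i : X ⟶ Y), Mono i → ∀ f : X ⟶ N s, ∃ g : Y ⟶ N s, i ≫ g = f
  φ_ess : ∀ (s : S) (Z : A) (g : Z ⟶ M s), Epi (g ≫ φ s) → Epi g
  ψ_ess : ∀ (s : S) (Z : A) (g : N s ⟶ Z), Mono (ψ s ≫ g) → Mono g
  M_mult : ∀ (s : S) (l : List A), CompFactors (M s) l → mult (L s) l = 1
  N_mult : ∀ (s : S) (l : List A), CompFactors (N s) l → mult (L s) l = 1

end StmtAux

/-!
Every map `M s ⟶ X` is a combination of the basis maps, so it dies in `X' = X / X_s`.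
If `h : X ⟶ N r` is nonzero and `X ∈ A_{⪯ r}`, the simple socle `L r` of `N r` lies in the image
of `h`, and projectivity of `M r` lifts `M r ↠ L r` to a map `g : M r ⟶ X` with `g ≫ h ≠ 0`.
For `r = s` this rules out nonzero maps `X' ⟶ N s`. For `r ≠ s`, a map `h` not killing `X_s`
gives a nonzero `M s ⟶ N r`, whose image has top `L s`, so `s ≤ r`; then `X ∈ A_{⪯ r}` and the
lift above is a nonzero map `M r ⟶ X`, contradicting the maximality of `s`.
-/

namespace StmtAux

variable {A : Type u} [Category.{v} A] [Abelian A]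

theorem not_isZero_image_of_ne_zero {X Y : A} {f : X ⟶ Y} (hf : f ≠ 0) : ¬ IsZero (image f) :=
  fun hz => hf (by rw [← image.fac f, hz.eq_of_src (image.ι f) 0, comp_zero])

namespace CompFactors

theorem exists_iso_of_epi {X : A} {l : List A} (h : CompFactors X l) {L₀ : A} [Simple L₀]
    (q : X ⟶ L₀) [Epi q] : ∃ M ∈ l, Nonempty (M ≅ L₀) := by
  induction h with
  | nil hz => exact absurd (IsZero.of_epi q hz) (Simple.not_isZero L₀)
  | @cons X Y L l hL i p w hse _ ih =>
    have := hse.epi_g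
    by_cases hiq : i ≫ q = 0
    · obtain ⟨u, hu⟩ : ∃ u : L ⟶ L₀, p ≫ u = q :=
        ⟨_, (CokernelCofork.IsColimit.desc' hse.exact.gIsCokernel q hiq).2⟩
      have hu0 : u ≠ 0 := fun h0 =>
        Simple.not_isZero L₀ (IsZero.of_epi_eq_zero q (by rw [← hu, h0, comp_zero]))
      have := isIso_of_hom_simple hu0
      exact ⟨L, List.mem_cons_self, ⟨asIso u⟩⟩
    · have := epi_of_nonzero_to_simple hiq
      obtain ⟨M, hM, hML⟩ := ih (i ≫ q)
      exact ⟨M, List.mem_cons_of_mem _ hM, hML⟩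

theorem exists_subset_of_mono {X : A} {l : List A} (h : CompFactors X l) {Y : A} (j : Y ⟶ X)
    [Mono j] : ∃ l', CompFactors Y l' ∧ l' ⊆ l := by
  induction h generalizing Y with
  | nil hz => exact ⟨[], nil (IsZero.of_mono j hz), List.nil_subset _⟩
  | @cons X Z L l hL i p w hse _ ih =>
    have := hse.mono_f
    by_cases hjp : j ≫ p = 0
    · obtain ⟨j', hj'⟩ : ∃ j' : Y ⟶ Z, j' ≫ i = j :=
        ⟨_, (KernelFork.IsLimit.lift' hse.exact.fIsKernel j hjp).2⟩
      have : Mono j' := mono_of_mono_fac hj'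
      obtain ⟨l', hl', hsub⟩ := ih j'
      exact ⟨l', hl', List.subset_cons_of_subset _ hsub⟩
    · -- `Y` is an extension of `L` by `kernel (j ≫ p)`, which embeds into `Z`.
      have := epi_of_nonzero_to_simple hjp
      obtain ⟨m, hm⟩ : ∃ m : kernel (j ≫ p) ⟶ Z, m ≫ i = kernel.ι (j ≫ p) ≫ j :=
        ⟨_, (KernelFork.IsLimit.lift' hse.exact.fIsKernel (kernel.ι (j ≫ p) ≫ j) (by simp)).2⟩
      have : Mono m := by
        have : Mono (m ≫ i) := by rw [hm]; infer_instance
        exact mono_of_mono m i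
      obtain ⟨l', hl', hsub⟩ := ih m
      have hse' : (ShortComplex.mk (kernel.ι (j ≫ p)) (j ≫ p) (kernel.condition _)).ShortExact :=
        ShortComplex.ShortExact.mk' (ShortComplex.exact_kernel _) inferInstance inferInstance
      exact ⟨L :: l', cons hL _ _ _ hse' hl', List.cons_subset_cons _ hsub⟩

end CompFactors

section InSub

variable {S : Type*} [LinearOrder S] {L : S → A} {s : S} {X : A}

theorem InSub.of_mono (hX : InSub L s X) {Y : A} (j : Y ⟶ X) [Mono j] : InSub L s Y := by
  obtain ⟨l, hl, hfac⟩ := hX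
  obtain ⟨l', hl', hsub⟩ := hl.exists_subset_of_mono j
  exact ⟨l', hl', fun M hM => hfac M (hsub hM)⟩

theorem InSub.of_le (hX : InSub L s X) {t : S} (hst : s ≤ t) : InSub L t X := by
  obtain ⟨l, hl, hfac⟩ := hX
  refine ⟨l, hl, fun M hM => ?_⟩
  obtain ⟨r, hrs, hML⟩ := hfac M hM
  exact ⟨r, hrs.trans hst, hML⟩

theorem InSub.exists_le_of_epi (hX : InSub L s X) {L₀ : A} [Simple L₀] (q : X ⟶ L₀) [Epi q] :
    ∃ t ≤ s, Nonempty (L₀ ≅ L t) := by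
  obtain ⟨l, hl, hfac⟩ := hX
  obtain ⟨M, hM, ⟨eM⟩⟩ := hl.exists_iso_of_epi q
  obtain ⟨t, hts, ⟨eMt⟩⟩ := hfac M hM
  exact ⟨t, hts, ⟨eM.symm ≪≫ eMt⟩⟩

end InSub

theorem exists_fac_of_essential_epi {P Q L₀ : A} [Simple L₀] (φ : P ⟶ L₀) [Epi φ]
    (ess : ∀ (Z : A) (g : Z ⟶ P), Epi (g ≫ φ) → Epi g) (π : P ⟶ Q) [Epi π]
    (hQ : ¬ IsZero Q) : ∃ v : Q ⟶ L₀, π ≫ v = φ := by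
  have hker : kernel.ι π ≫ φ = 0 := by
    by_contra hne
    have : Epi (kernel.ι π) := ess _ _ (epi_of_nonzero_to_simple hne)
    have : IsIso (kernel.ι π) := isIso_of_mono_of_epi _
    exact hQ (IsZero.of_epi_eq_zero π ((cancel_epi (kernel.ι π)).1 (by simp)))
  exact ⟨Abelian.epiDesc π φ hker, Abelian.comp_epiDesc π φ hker⟩

theorem exists_fac_of_essential_mono {Q N L₀ : A} [Simple L₀] (ψ : L₀ ⟶ N) [Mono ψ]
    (ess : ∀ (Z : A) (g : N ⟶ Z), Mono (ψ ≫ g) → Mono g) (ι : Q ⟶ N) [Mono ι]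
    (hQ : ¬ IsZero Q) : ∃ u : L₀ ⟶ Q, u ≫ ι = ψ := by
  have hcok : ψ ≫ cokernel.π ι = 0 := by
    by_contra hne
    have : Mono (cokernel.π ι) := ess _ _ (mono_of_nonzero_from_simple hne)
    have : IsIso (cokernel.π ι) := isIso_of_mono_of_epi _
    exact hQ (IsZero.of_mono_eq_zero ι ((cancel_mono (cokernel.π ι)).1 (by simp)))
  exact ⟨Abelian.monoLift ι ψ hcok, Abelian.monoLift_comp ι ψ hcok⟩

theorem comp_cokernel_image_biproduct_desc_eq_zero {k : Type*} [Field k] [Linear k A]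
    {ι : Type*} [Fintype ι] {P X : A} (b : Module.Basis ι k (P ⟶ X)) (f : P ⟶ X) :
    f ≫ cokernel.π (image.ι (biproduct.desc fun i => b i)) = 0 := by
  have hb : ∀ i, b i ≫ cokernel.π (image.ι (biproduct.desc fun i => b i)) = 0 := fun i => by
    rw [← biproduct.ι_desc (fun i => b i) i, Category.assoc, ← image.fac_assoc (biproduct.desc fun i => b i),
      cokernel.condition, comp_zero, comp_zero]
  rw [← b.sum_repr f, Preadditive.sum_comp]
  exact Finset.sum_eq_zero fun i _ => by rw [Linear.smul_comp, hb, smul_zero]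

namespace QHData

variable {S : Type*} [LinearOrder S] {L : S → A} (d : QHData L)

theorem φ_comp_ψ_ne_zero (s : S) [Simple (L s)] : d.φ s ≫ d.ψ s ≠ 0 := fun h => by
  have := d.φ_epi s
  have := d.ψ_mono s
  exact Simple.not_isZero (L s)
    (IsZero.of_mono_eq_zero _ ((cancel_epi (d.φ s)).1 (by rw [h, comp_zero])))

theorem exists_comp_ne_zero_of_ne_zero {r : S} [Simple (L r)] {X : A} (hX : InSub L r X)
    (h : X ⟶ d.N r) (hh : h ≠ 0) : ∃ g : d.M r ⟶ X, g ≫ h ≠ 0 := by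
  have := d.ψ_mono r
  obtain ⟨u, hu⟩ := exists_fac_of_essential_mono (d.ψ r) (d.ψ_ess r) (image.ι h)
    (not_isZero_image_of_ne_zero hh)
  obtain ⟨g, hg⟩ := d.M_proj r X (image h) hX ((d.N_mem r).of_mono (image.ι h))
    (factorThruImage h) inferInstance (d.φ r ≫ u)
  refine ⟨g, ?_⟩
  rw [← image.fac h, ← Category.assoc, hg, Category.assoc, hu]
  exact d.φ_comp_ψ_ne_zero r

theorem le_of_hom_ne_zero (hdist : ∀ s t : S, Nonempty (L s ≅ L t) → s = t) {s r : S}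
    [Simple (L s)] (f : d.M s ⟶ d.N r) (hf : f ≠ 0) : s ≤ r := by
  have := d.φ_epi s
  obtain ⟨v, hv⟩ := exists_fac_of_essential_epi (d.φ s) (d.φ_ess s) (factorThruImage f)
    (not_isZero_image_of_ne_zero hf)
  have : Epi v := epi_of_epi_fac hv
  obtain ⟨t, htr, hst⟩ := ((d.N_mem r).of_mono (image.ι f)).exists_le_of_epi v
  exact hdist s t hst ▸ htr

end QHData

end StmtAux

theorem stmt15_general (k : Type*) [Field k] (A : Type u) [Category.{v} A] [Abelian A]
    [Linear k A]
    {S : Type*} [LinearOrder S] (L : S → A)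
    (hsimple : ∀ s : S, Simple (L s))
    (hdist : ∀ s t : S, Nonempty (L s ≅ L t) → s = t)
    (d : QHData L) (s : S) (X : A)
    (hX : InSub L s X)
    (hmax : ∀ t : S, (∃ f : d.M t ⟶ X, f ≠ 0) → t ≤ s)
    (n : ℕ) (b : Module.Basis (Fin n) k (d.M s ⟶ X))
    (e : (⨁ fun _ : Fin n => d.M s) ⟶ X)
    (he : e = biproduct.desc fun i : Fin n => b i) :
    (∀ g : cokernel (image.ι e) ⟶ d.N s, g = 0) ∧
    ∀ r : S, r ≠ s →
      Function.Bijective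
        (fun g : cokernel (image.ι e) ⟶ d.N r => cokernel.π (image.ι e) ≫ g) := by
  subst he
  have hπ := comp_cokernel_image_biproduct_desc_eq_zero b
  refine ⟨fun g => ?_, fun r hr => ⟨fun g₁ g₂ h => (cancel_epi (cokernel.π _)).1 h, fun h => ?_⟩⟩
  · by_contra hg
    have := hsimple s
    obtain ⟨f, hf⟩ := d.exists_comp_ne_zero_of_ne_zero hX (cokernel.π _ ≫ g)
      (fun h0 => hg ((cancel_epi (cokernel.π _)).1 (h0.trans comp_zero.symm)))
    exact hf (by rw [← Category.assoc, hπ, zero_comp])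
  · have hMh : ∀ f : d.M s ⟶ X, f ≫ h = 0 := fun f => by
      by_contra hf
      have := hsimple s
      have := hsimple r
      have hsr := d.le_of_hom_ne_zero hdist (f ≫ h) hf
      obtain ⟨g, hg⟩ := d.exists_comp_ne_zero_of_ne_zero (hX.of_le hsr) h
        (fun h0 => hf (by rw [h0, comp_zero]))
      exact hr (le_antisymm (hmax r ⟨g, fun g0 => hg (by rw [g0, zero_comp])⟩) hsr)
    have he : biproduct.desc (fun i => b i) ≫ h = 0 :=
      biproduct.hom_ext' _ _ fun i => by simp [hMh]
    have hι : image.ι (biproduct.desc fun i => b i) ≫ h = 0 :=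
      (cancel_epi (factorThruImage _)).1 (by rw [image.fac_assoc, he, comp_zero])
    exact ⟨cokernel.desc _ h hι, cokernel.π_desc _ _ _⟩

/-- (inductive step of Proposition 2.6) Let `s` be the maximal
element of `S` with `Hom(M s, X) ≠ 0` for an object `X ∈ A_{⪯ s}`.  Let `X_s` be
the image of the evaluation map `Hom(M s, X) ⊗ M s → X` and `X' = X / X_s`.
Then `Hom(X', N r) ≅ Hom(X, N r)` (via composition with the quotient map) for
all `r ≠ s`, and `Hom(X', N s) = 0`. -/
theorem stmt15 (k : Type*) [Field k] (A : Type u) [Category.{v} A] [Abelian A]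
    [Linear k A]
    (hfl : ∀ X : A, ∃ l : List A, CompFactors X l)
    (hend : ∀ L : A, Simple L → ∀ f : L ⟶ L, ∃ c : k, f = c • 𝟙 L)
    {S : Type*} [LinearOrder S] (L : S → A)
    (hsimple : ∀ s : S, Simple (L s))
    (hdist : ∀ s t : S, Nonempty (L s ≅ L t) → s = t)
    (d : QHData L) (s : S) (X : A)
    (hX : InSub L s X)
    (hmax : ∀ t : S, (∃ f : d.M t ⟶ X, f ≠ 0) → t ≤ s)
    (hne : ∃ f : d.M s ⟶ X, f ≠ 0)
    (n : ℕ) (b : Module.Basis (Fin n) k (d.M s ⟶ X))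
    (e : (⨁ fun _ : Fin n => d.M s) ⟶ X)
    (he : e = biproduct.desc fun i : Fin n => b i) :
    (∀ g : cokernel (image.ι e) ⟶ d.N s, g = 0) ∧
    ∀ r : S, r ≠ s →
      Function.Bijective
        (fun g : cokernel (image.ι e) ⟶ d.N r => cokernel.π (image.ι e) ≫ g) :=
  stmt15_general k A L hsimple hdist d s X hX hmax n b e he
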